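/- For the serious-behavior utility U_S(p) = −p^w − h/(pdr(γ(p)))^v − D(x,p) with γ(p) = g·p/I, pdr(γ) = exp(a·γ^b), the second derivative of the middle term −h·exp(−v·a·(gp/I)^b) with respect to p equals (a·b·h·v·γ^b / (p²·pdr^v))·(−1 + b − a·b·v·γ^b), and under a < 0, b < 0, h > 0, v > 0 this expression is strictly negative. -/

import Mathlib

/-!
Write `u(x) = (c x)^b` with `c = g/I`, so that the penalty term is `-h·exp(-a v u)` and
`x u'(x) = b u(x)`. Differentiating twice gives `a b h v · u e^{-a v u} / x² · (b - 1 - a b v u)`.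
For `a, b < 0` and `h, v, u > 0` the prefactor is positive, while `b - 1 < 0` and `a b v u > 0`
make the bracket negative.
-/

open Real Filter Topology

lemma deriv_deriv_eq_of_eventually_hasDerivAt {f f' : ℝ → ℝ} {x f'' : ℝ}
    (hf : ∀ᶠ y in 𝓝 x, HasDerivAt f (f' y) y) (hf' : HasDerivAt f' f'' x) :
    deriv (deriv f) x = f'' := by
  have hderiv : deriv f =ᶠ[𝓝 x] f' := hf.mono fun _ hy => hy.deriv
  rw [hderiv.deriv_eq, hf'.deriv]

lemma hasDerivAt_mul_rpow_const {c b x : ℝ} (hc : c ≠ 0) (hx : x ≠ 0) :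
    HasDerivAt (fun y => (c * y) ^ b) (b * (c * x) ^ b / x) x := by
  have hcx : c * x ≠ 0 := mul_ne_zero hc hx
  refine ((hasDerivAt_rpow_const (p := b) (Or.inl hcx)).comp x
    ((hasDerivAt_id x).const_mul c)).congr_deriv ?_
  rw [rpow_sub_one hcx]
  field_simp

lemma div_exp_rpow (h t v : ℝ) : h / exp t ^ v = h * exp (-(t * v)) := by
  rw [← exp_mul, exp_neg, div_eq_mul_inv]

variable {a b c h v x : ℝ}

lemma hasDerivAt_neg_div_exp_mul_rpow_rpow (hc : c ≠ 0) (hx : x ≠ 0) :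
    HasDerivAt (fun y => -(h / exp (a * (c * y) ^ b) ^ v))
      (a * b * h * v * ((c * x) ^ b / x * exp (-(a * (c * x) ^ b * v)))) x := by
  simp only [div_exp_rpow]
  exact ((((hasDerivAt_mul_rpow_const hc hx).const_mul a).mul_const v).neg.exp.const_mul h).neg
    |>.congr_deriv (by simp only [Pi.neg_apply]; ring)

lemma hasDerivAt_rpow_div_mul_exp (hc : c ≠ 0) (hx : x ≠ 0) :
    HasDerivAt (fun y => a * b * h * v * ((c * y) ^ b / y * exp (-(a * (c * y) ^ b * v))))
      (a * b * h * v * (c * x) ^ b / (x ^ 2 * exp (a * (c * x) ^ b) ^ v) *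
        (-1 + b - a * b * v * (c * x) ^ b)) x := by
  have hu := hasDerivAt_mul_rpow_const (b := b) hc hx
  refine (((hu.div (hasDerivAt_id x) hx).mul
    ((hu.const_mul a).mul_const v).neg.exp).const_mul (a * b * h * v)).congr_deriv ?_
  simp only [Pi.neg_apply, Pi.div_apply, id_eq]
  rw [← exp_mul, exp_neg]
  field_simp
  ring

lemma mul_rpow_div_mul_exp_neg (ha : a < 0) (hb : b < 0) (hh : 0 < h) (hv : 0 < v)
    (hc : 0 < c) (hx : 0 < x) :
    a * b * h * v * (c * x) ^ b / (x ^ 2 * exp (a * (c * x) ^ b) ^ v) *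
      (-1 + b - a * b * v * (c * x) ^ b) < 0 := by
  have hab : 0 < a * b := mul_pos_of_neg_of_neg ha hb
  have hu : 0 < (c * x) ^ b := rpow_pos_of_pos (mul_pos hc hx) b
  have hbracket : 0 < a * b * v * (c * x) ^ b := by positivity
  exact mul_neg_of_pos_of_neg (by positivity) (by linarith)

/-- In the serious-behavior utility, the PDR penalty term `−h/(pdr(γ(p)))^v` with
`γ(p) = g·p/I`, `pdr(γ) = exp(a·γ^b)` has second derivative
`(a·b·h·v·γ^b / (p²·pdr^v))·(−1 + b − a·b·v·γ^b)`, which is strictly negative for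
`a < 0`, `b < 0`, `h > 0`, `v > 0`. -/
theorem stmt14 (a b g I h v : ℝ) (ha : a < 0) (hb : b < 0) (hg : 0 < g) (hI : 0 < I)
    (hh : 0 < h) (hv : 0 < v) :
    ∀ p : ℝ, 0 < p →
      deriv (deriv (fun p : ℝ =>
          -(h / (Real.exp (a * (g * p / I) ^ b)) ^ v))) p =
        (a * b * h * v * (g * p / I) ^ b /
            (p ^ 2 * (Real.exp (a * (g * p / I) ^ b)) ^ v)) *
          (-1 + b - a * b * v * (g * p / I) ^ b) ∧
      (a * b * h * v * (g * p / I) ^ b /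
            (p ^ 2 * (Real.exp (a * (g * p / I) ^ b)) ^ v)) *
          (-1 + b - a * b * v * (g * p / I) ^ b) < 0 := by
  intro p hp
  have hc : 0 < g / I := div_pos hg hI
  have hγ (x : ℝ) : g * x / I = g / I * x := mul_div_right_comm g x I
  simp only [hγ]
  refine ⟨deriv_deriv_eq_of_eventually_hasDerivAt ?_ (hasDerivAt_rpow_div_mul_exp hc.ne' hp.ne'),
    mul_rpow_div_mul_exp_neg ha hb hh hv hc hp⟩
  filter_upwards [eventually_ne_nhds hp.ne'] with x hx
  exact hasDerivAt_neg_div_exp_mul_rpow_rpow hc.ne' hx
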